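/- arXiv:2505.18394 — 4 statements merged into one kernel-verified Lean document; each statement's English description precedes it below -/
import Mathlib

section
/- Let m < 0 < n with m + 1 < 0. Define θ(q) = q·(((n+1)/n - q)/((m+1)/m - q))^{1/(n-m)} for q ∈ (0, (m+1)/m). Then lim_{q→0+} θ(q) = 0, θ is strictly increasing on (0, (m+1)/m), and lim_{q→(m+1)/m} θ(q) = ∞. -/
theorem stmt_9 (m n : ℝ) (hm : m < 0) (hn : 0 < n) (hm1 : m + 1 < 0) :
    let θ : ℝ → ℝ := fun q =>
      q * (((n + 1) / n - q) / ((m + 1) / m - q)) ^ (1 / (n - m))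
    Filter.Tendsto θ (nhdsWithin 0 (Set.Ioi 0)) (nhds 0) ∧
    StrictMonoOn θ (Set.Ioo (0 : ℝ) ((m + 1) / m)) ∧
    Filter.Tendsto θ (nhdsWithin ((m + 1) / m) (Set.Iio ((m + 1) / m)))
      Filter.atTop := by
  intro θ
  set a : ℝ := (n + 1) / n with ha_def
  set b : ℝ := (m + 1) / m with hb_def
  set p : ℝ := 1 / (n - m) with hp_def
  have hb : 0 < b := div_pos_of_neg_of_neg hm1 hm
  have hbm : b = 1 + 1 / m := by rw [hb_def]; field_simp [hm.ne]
  have ham : a = 1 + 1 / n := by rw [ha_def]; field_simp [hn.ne']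
  have h1m : 1 / m < 0 := one_div_neg.mpr hm
  have h1n : 0 < 1 / n := one_div_pos.mpr hn
  have hb1 : b < 1 := by rw [hbm]; linarith
  have ha1 : 1 < a := by rw [ham]; linarith
  have hba : b < a := hb1.trans ha1
  have hp : 0 < p := one_div_pos.mpr (by linarith)
  refine ⟨?_, ?_, ?_⟩
  · -- limit at 0⁺
    have hc : ContinuousAt (fun q : ℝ => ((a - q) / (b - q)) ^ p) 0 := by
      apply ContinuousAt.rpow_const
      · exact (continuousAt_const.sub continuousAt_id).div
          (continuousAt_const.sub continuousAt_id) (by simpa using hb.ne')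
      · exact Or.inr hp.le
    have h1 : Filter.Tendsto (fun q : ℝ => q) (nhdsWithin 0 (Set.Ioi 0)) (nhds 0) :=
      Filter.tendsto_id.mono_left nhdsWithin_le_nhds
    have h2 := (hc.tendsto.mono_left (nhdsWithin_le_nhds
      (s := Set.Ioi (0:ℝ))))
    have := h1.mul h2
    simpa using this
  · -- strict monotonicity
    intro x hx y hy hxy
    have hax : 0 < a - x := by linarith [hx.2, hx.1]
    have hbx : 0 < b - x := by linarith [hx.2]
    have hby : 0 < b - y := by linarith [hy.2]
    have hg : (a - x) / (b - x) < (a - y) / (b - y) := by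
      rw [div_lt_div_iff₀ hbx hby]
      nlinarith [mul_pos (sub_pos.mpr hxy) (sub_pos.mpr hba)]
    have hgnn : 0 ≤ (a - x) / (b - x) := le_of_lt (div_pos hax hbx)
    have hr : ((a - x) / (b - x)) ^ p < ((a - y) / (b - y)) ^ p :=
      Real.rpow_lt_rpow hgnn hg hp
    exact mul_lt_mul'' hxy hr hx.1.le (Real.rpow_nonneg hgnn p)
  · -- limit at b⁻
    have t1 : Filter.Tendsto (fun q : ℝ => a - q) (nhdsWithin b (Set.Iio b))
        (nhds (a - b)) :=
      ((continuous_const.sub continuous_id).tendsto b).mono_left nhdsWithin_le_nhds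
    have t0 : Filter.Tendsto (fun q : ℝ => b - q) (nhdsWithin b (Set.Iio b))
        (nhdsWithin 0 (Set.Ioi 0)) := by
      rw [tendsto_nhdsWithin_iff]
      constructor
      · have h : Filter.Tendsto (fun q : ℝ => b - q) (nhds b) (nhds (b - b)) :=
          (continuous_const.sub continuous_id).tendsto b
        simpa using h.mono_left nhdsWithin_le_nhds
      · exact eventually_mem_nhdsWithin.mono (fun q hq => Set.mem_Ioi.mpr (sub_pos.mpr hq))
    have t2 : Filter.Tendsto (fun q : ℝ => (b - q)⁻¹)
        (nhdsWithin b (Set.Iio b)) Filter.atTop :=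
      tendsto_inv_nhdsGT_zero.comp t0
    have t3 : Filter.Tendsto (fun q : ℝ => (a - q) / (b - q))
        (nhdsWithin b (Set.Iio b)) Filter.atTop := by
      simp only [div_eq_mul_inv]
      exact Filter.Tendsto.pos_mul_atTop (by linarith) t1 t2
    have t4 : Filter.Tendsto (fun q : ℝ => ((a - q) / (b - q)) ^ p)
        (nhdsWithin b (Set.Iio b)) Filter.atTop :=
      (tendsto_rpow_atTop hp).comp t3
    exact Filter.Tendsto.pos_mul_atTop hb
      (Filter.tendsto_id.mono_left nhdsWithin_le_nhds) t4
end

section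
/- Let m < 0 < n with m + 1 < 0, and set γ(s) = (1 - e^{-s})/s. There exist a point q† ∈ (0, (m+1)/m) and a continuous strictly increasing function ζ : (0,∞) → (0,∞) with lim_{s→0+} ζ(s) = q†, lim_{s→∞} ζ(s) = (m+1)/m, such that for all s > 0 the expression ((n+1)/n - q)(γ(s)q)^{n-m} + q - (m+1)/m is negative for 0 < q < ζ(s) and positive for ζ(s) < q (with q ≤ 1/γ(s)). -/
open Set Filter Real Topology

set_option maxHeartbeats 2000000 in
theorem stmt_10 (m n : ℝ) (hm : m < 0) (hn : 0 < n) (hm1 : m + 1 < 0) :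
    let γ : ℝ → ℝ := fun s => (1 - Real.exp (-s)) / s
    ∃ qd : ℝ, qd ∈ Set.Ioo (0 : ℝ) ((m + 1) / m) ∧
    ∃ ζ : ℝ → ℝ,
      ContinuousOn ζ (Set.Ioi 0) ∧
      (∀ s : ℝ, 0 < s → 0 < ζ s) ∧
      StrictMonoOn ζ (Set.Ioi (0 : ℝ)) ∧
      Filter.Tendsto ζ (nhdsWithin 0 (Set.Ioi 0)) (nhds qd) ∧
      Filter.Tendsto ζ Filter.atTop (nhds ((m + 1) / m)) ∧
      ∀ s q : ℝ, 0 < s →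
        (0 < q → q < ζ s →
          ((n + 1) / n - q) * (γ s * q) ^ (n - m) + q - (m + 1) / m < 0) ∧
        (ζ s < q → q ≤ 1 / γ s →
          ((n + 1) / n - q) * (γ s * q) ^ (n - m) + q - (m + 1) / m > 0) := by
  intro γ
  have hγdef : ∀ s, γ s = (1 - Real.exp (-s)) / s := fun _ => rfl
  set A : ℝ := (n + 1) / n with hAdef
  set B : ℝ := (m + 1) / m with hBdef
  set p : ℝ := n - m with hpdef
  have hp0 : (0:ℝ) < p := by rw [hpdef]; linarith
  have hB0 : (0:ℝ) < B := by
    rw [hBdef, ← neg_div_neg_eq]; exact div_pos (by linarith) (by linarith)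
  have hB1 : B < 1 := by
    rw [hBdef, div_lt_iff_of_neg hm]; linarith
  have hA1 : (1:ℝ) < A := by
    rw [hAdef, lt_div_iff₀ hn]; linarith
  -- helper for inverting inequalities
  have hltinv : ∀ x y : ℝ, 0 < x → 0 < y → (x < 1 / y ↔ y < 1 / x) := by
    intro x y hx hy
    rw [lt_div_iff₀ hy, lt_div_iff₀ hx]
    constructor <;> intro h <;> nlinarith
  set θ : ℝ → ℝ := fun q => q * ((A - q) / (B - q)) ^ (p⁻¹) with hθdef
  have hAq : ∀ q ∈ Ioo (0:ℝ) B, 0 < A - q := fun q hq => by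
    have := hq.2; linarith
  have hBq : ∀ q ∈ Ioo (0:ℝ) B, 0 < B - q := fun q hq => by
    have := hq.2; linarith
  have hθpos : ∀ q ∈ Ioo (0:ℝ) B, 0 < θ q := fun q hq =>
    mul_pos hq.1 (Real.rpow_pos_of_pos (div_pos (hAq q hq) (hBq q hq)) _)
  -- strict monotonicity of θ
  have hθmono : StrictMonoOn θ (Ioo (0:ℝ) B) := by
    intro x hx y hy hxy
    have hrx : 0 < (A - x) / (B - x) := div_pos (hAq x hx) (hBq x hx)
    have hry : 0 < (A - y) / (B - y) := div_pos (hAq y hy) (hBq y hy)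
    have hr : (A - x) / (B - x) ≤ (A - y) / (B - y) := by
      rw [div_le_div_iff₀ (hBq x hx) (hBq y hy)]
      nlinarith [mul_pos (sub_pos.2 hxy) (by linarith : (0:ℝ) < A - B)]
    calc θ x = x * ((A - x) / (B - x)) ^ (p⁻¹) := rfl
      _ ≤ x * ((A - y) / (B - y)) ^ (p⁻¹) :=
          mul_le_mul_of_nonneg_left
            (Real.rpow_le_rpow hrx.le hr (by positivity)) hx.1.le
      _ < y * ((A - y) / (B - y)) ^ (p⁻¹) :=
          mul_lt_mul_of_pos_right hxy (Real.rpow_pos_of_pos hry _)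
  -- continuity of θ
  have hθcont : ContinuousOn θ (Ioo (0:ℝ) B) := by
    apply ContinuousOn.mul continuous_id.continuousOn
    apply ContinuousOn.rpow_const
    · exact (continuousOn_const.sub continuous_id.continuousOn).div
        (continuousOn_const.sub continuous_id.continuousOn)
        (fun x hx => (hBq x hx).ne')
    · exact fun x hx => Or.inl (div_pos (hAq x hx) (hBq x hx)).ne'
  -- key sign lemma
  have key : ∀ c q : ℝ, 0 < c → q ∈ Ioo (0:ℝ) B →
      (((A - q) * (c * q) ^ p + q - B < 0 ↔ c * θ q < 1) ∧
       (0 < (A - q) * (c * q) ^ p + q - B ↔ 1 < c * θ q)) := by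
    intro c q hc hq
    have hA' := hAq q hq
    have hB' := hBq q hq
    have hcq : 0 < c * q := mul_pos hc hq.1
    have hrr : 0 < (A - q) / (B - q) := div_pos hA' hB'
    set t : ℝ := ((A - q) / (B - q)) ^ (p⁻¹) with htdef
    have ht : 0 < t := Real.rpow_pos_of_pos hrr _
    have hRrp : ((B - q) / (A - q)) ^ (p⁻¹) = t⁻¹ := by
      rw [htdef, ← Real.inv_rpow hrr.le, inv_div]
    have hiff1 : c * q < ((B - q) / (A - q)) ^ (p⁻¹) ↔
        (c * q) ^ p < (B - q) / (A - q) :=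
      Real.lt_rpow_inv_iff_of_pos hcq.le (div_pos hB' hA').le hp0
    have hiff2 : ((B - q) / (A - q)) ^ (p⁻¹) < c * q ↔
        (B - q) / (A - q) < (c * q) ^ p :=
      Real.rpow_inv_lt_iff_of_pos (div_pos hB' hA').le hcq.le hp0
    have hθq : c * θ q = c * q * t := by rw [hθdef]; ring
    have h4 : c * θ q < 1 ↔ (c * q) ^ p < (B - q) / (A - q) := by
      rw [hθq, ← hiff1, hRrp, ← one_div, lt_div_iff₀ ht]
    have h5 : 1 < c * θ q ↔ (B - q) / (A - q) < (c * q) ^ p := by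
      rw [hθq, ← hiff2, hRrp, ← one_div, div_lt_iff₀ ht]
    have hf : (A - q) * (c * q) ^ p + q - B < 0 ↔ (c * q) ^ p < (B - q) / (A - q) := by
      rw [lt_div_iff₀ hA']
      constructor <;> intro h <;> nlinarith
    have hg : 0 < (A - q) * (c * q) ^ p + q - B ↔ (B - q) / (A - q) < (c * q) ^ p := by
      rw [div_lt_iff₀ hA']
      constructor <;> intro h <;> nlinarith
    exact ⟨hf.trans h4.symm, hg.trans h5.symm⟩
  -- surjectivity of θ onto (0, ∞)
  have hex : ∀ y : ℝ, 0 < y → ∃ q ∈ Ioo (0:ℝ) B, θ q = y := by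
    intro y hy
    have h0 : Tendsto θ (𝓝[>] (0:ℝ)) (𝓝 0) := by
      have hc : ContinuousAt (fun q : ℝ => ((A - q) / (B - q)) ^ (p⁻¹)) 0 := by
        apply ContinuousAt.rpow_const
        · exact (continuousAt_const.sub continuousAt_id).div
            (continuousAt_const.sub continuousAt_id) (by simpa using hB0.ne')
        · exact Or.inr (by positivity)
      have := (tendsto_id.mono_left (nhdsWithin_le_nhds : 𝓝[>] (0:ℝ) ≤ 𝓝 0)).mul
        (hc.tendsto.mono_left (nhdsWithin_le_nhds : 𝓝[>] (0:ℝ) ≤ 𝓝 0))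
      simpa using this
    have hBtop : Tendsto θ (𝓝[<] B) atTop := by
      have h1 : Tendsto (fun q => B - q) (𝓝[<] B) (𝓝[>] (0:ℝ)) := by
        apply tendsto_nhdsWithin_of_tendsto_nhds_of_eventually_within
        · have : Tendsto (fun q => B - q) (𝓝 B) (𝓝 (B - B)) :=
            (continuous_const.sub continuous_id).tendsto B
          simpa using this.mono_left nhdsWithin_le_nhds
        · filter_upwards [self_mem_nhdsWithin] with q hq
          simp only [mem_Iio] at hq
          simp only [mem_Ioi]
          linarith
      have h2 : Tendsto (fun q => (A - q) / (B - q)) (𝓝[<] B) atTop := by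
        have hnum : Tendsto (fun q => A - q) (𝓝[<] B) (𝓝 (A - B)) :=
          ((continuous_const.sub continuous_id).tendsto B).mono_left
            nhdsWithin_le_nhds
        have hinv : Tendsto (fun q => (B - q)⁻¹) (𝓝[<] B) atTop :=
          h1.inv_tendsto_nhdsGT_zero
        have := Filter.Tendsto.pos_mul_atTop (by linarith : (0:ℝ) < A - B) hnum hinv
        refine this.congr fun q => ?_
        rw [div_eq_mul_inv]
      have h3 : Tendsto (fun q => ((A - q) / (B - q)) ^ (p⁻¹)) (𝓝[<] B) atTop :=
        (tendsto_rpow_atTop (by positivity)).comp h2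
      exact Filter.Tendsto.pos_mul_atTop hB0
        ((continuous_id.tendsto B).mono_left nhdsWithin_le_nhds) h3
    obtain ⟨q1, hq1l, hq1m⟩ := ((h0.eventually_lt_const hy).and
      (eventually_of_mem (Ioo_mem_nhdsGT hB0) (fun x hx => hx))).exists
    obtain ⟨q2, hq2l, hq2m⟩ := ((hBtop.eventually_gt_atTop y).and
      (eventually_of_mem (Ioo_mem_nhdsLT hB0) (fun x hx => hx))).exists
    have h12 : q1 < q2 := by
      by_contra hcon
      push_neg at hcon
      rcases eq_or_lt_of_le hcon with heq | hlt
      · rw [heq] at hq2l; linarith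
      · have := hθmono hq2m hq1m hlt; linarith
    have hsub : Icc q1 q2 ⊆ Ioo (0:ℝ) B := fun x hx =>
      ⟨lt_of_lt_of_le hq1m.1 hx.1, lt_of_le_of_lt hx.2 hq2m.2⟩
    obtain ⟨q, hqm, hqe⟩ := intermediate_value_Icc h12.le (hθcont.mono hsub)
      ⟨hq1l.le, hq2l.le⟩
    exact ⟨q, hsub hqm, hqe⟩
  -- γ facts
  have hγpos : ∀ s : ℝ, 0 < s → 0 < γ s := by
    intro s hs
    rw [hγdef]
    apply div_pos _ hs
    have : Real.exp (-s) < 1 := Real.exp_lt_one_iff.mpr (by linarith)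
    linarith
  have hγlt1 : ∀ s : ℝ, 0 < s → γ s < 1 := by
    intro s hs
    rw [hγdef, div_lt_one hs]
    have := Real.add_one_lt_exp (x := -s) (by linarith)
    have hinv : Real.exp (-s) * Real.exp s = 1 := by
      rw [← Real.exp_add]; simp
    nlinarith [Real.exp_pos (-s), Real.exp_pos s]
  have hγcont : ContinuousOn γ (Ioi (0:ℝ)) := by
    have : ContinuousOn (fun s : ℝ => (1 - Real.exp (-s)) / s) (Ioi 0) :=
      ((continuous_const.sub (Real.continuous_exp.comp continuous_neg)).continuousOn).div
        continuous_id.continuousOn (fun x hx => ne_of_gt hx)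
    exact this
  have hγanti : StrictAntiOn γ (Ioi (0:ℝ)) := by
    have hderiv : ∀ x ∈ interior (Ioi (0:ℝ)), deriv γ x < 0 := by
      intro x hx
      rw [interior_Ioi] at hx
      have hx0 : (0:ℝ) < x := hx
      have h1 : HasDerivAt (fun s : ℝ => -s) (-1) x := (hasDerivAt_id x).neg
      have h2 : HasDerivAt (fun s : ℝ => Real.exp (-s)) (Real.exp (-x) * (-1)) x :=
        h1.exp
      have h3 : HasDerivAt (fun s : ℝ => 1 - Real.exp (-s))
          (-(Real.exp (-x) * (-1))) x := h2.const_sub 1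
      have h4 : HasDerivAt γ
          ((-(Real.exp (-x) * (-1)) * x - (1 - Real.exp (-x)) * 1) / x ^ 2) x :=
        h3.div (hasDerivAt_id x) hx0.ne'
      rw [h4.deriv]
      apply div_neg_of_neg_of_pos _ (by positivity)
      have := Real.add_one_lt_exp (x := x) hx0.ne'
      have hinv : Real.exp (-x) * Real.exp x = 1 := by
        rw [← Real.exp_add]; simp
      nlinarith [Real.exp_pos (-x), Real.exp_pos x]
    exact strictAntiOn_of_deriv_neg (convex_Ioi 0) hγcont hderiv
  have hγ0 : Tendsto γ (𝓝[>] (0:ℝ)) (𝓝 1) := by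
    have h1 : HasDerivAt (fun s : ℝ => -s) (-1) (0:ℝ) := (hasDerivAt_id 0).neg
    have h2 : HasDerivAt (fun s : ℝ => Real.exp (-s)) (Real.exp (-(0:ℝ)) * (-1)) 0 :=
      h1.exp
    have h3 : HasDerivAt (fun s : ℝ => 1 - Real.exp (-s))
        (-(Real.exp (-(0:ℝ)) * (-1))) 0 := h2.const_sub 1
    have h3' : HasDerivAt (fun s : ℝ => 1 - Real.exp (-s)) 1 0 := by
      convert h3 using 1; simp
    rw [hasDerivAt_iff_tendsto_slope] at h3'
    have h4 : Tendsto (slope (fun s : ℝ => 1 - Real.exp (-s)) 0) (𝓝[>] (0:ℝ)) (𝓝 1) :=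
      h3'.mono_left (nhdsWithin_mono 0 (fun x hx => by
        simp only [mem_Ioi] at hx
        simp only [mem_compl_iff, mem_singleton_iff]
        exact ne_of_gt hx))
    refine h4.congr' ?_
    filter_upwards [self_mem_nhdsWithin] with s hs
    simp only [mem_Ioi] at hs
    rw [slope_def_field, hγdef]
    norm_num
  have hγtop : Tendsto γ atTop (𝓝 0) := by
    have h1 : Tendsto (fun s : ℝ => 1 - Real.exp (-s)) atTop (𝓝 1) := by
      have := (tendsto_const_nhds (x := (1:ℝ)) (f := atTop)).sub
        Real.tendsto_exp_neg_atTop_nhds_zero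
      simpa using this
    have := h1.mul tendsto_inv_atTop_zero
    simp only [mul_zero] at this
    refine this.congr fun s => ?_
    rw [hγdef, div_eq_mul_inv]
  -- define qd and ζ
  obtain ⟨qd, hqdm, hqd1⟩ := hex 1 one_pos
  have hzex : ∀ s : ℝ, 0 < s → ∃ q ∈ Ioo (0:ℝ) B, θ q = 1 / γ s := fun s hs =>
    hex _ (by have := hγpos s hs; positivity)
  set ζ : ℝ → ℝ := fun s => if hs : 0 < s then (hzex s hs).choose else qd with hζdef
  have hζmem : ∀ s : ℝ, 0 < s → ζ s ∈ Ioo (0:ℝ) B := by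
    intro s hs
    rw [hζdef]; simp only [dif_pos hs]
    exact (hzex s hs).choose_spec.1
  have hζeq : ∀ s : ℝ, 0 < s → θ (ζ s) = 1 / γ s := by
    intro s hs
    rw [hζdef]; simp only [dif_pos hs]
    exact (hzex s hs).choose_spec.2
  -- bridging lemmas
  have hbridge1 : ∀ s : ℝ, 0 < s → ∀ a ∈ Ioo (0:ℝ) B, (ζ s < a ↔ 1 / γ s < θ a) := by
    intro s hs a ha
    rw [← hζeq s hs]
    exact (hθmono.lt_iff_lt (hζmem s hs) ha).symm
  have hbridge2 : ∀ s : ℝ, 0 < s → ∀ a ∈ Ioo (0:ℝ) B, (a < ζ s ↔ θ a < 1 / γ s) := by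
    intro s hs a ha
    rw [← hζeq s hs]
    exact (hθmono.lt_iff_lt ha (hζmem s hs)).symm
  have hu1 : ∀ s : ℝ, 0 < s → 1 < 1 / γ s := by
    intro s hs
    rw [lt_div_iff₀ (hγpos s hs)]
    simpa using hγlt1 s hs
  have hζgtqd : ∀ s : ℝ, 0 < s → qd < ζ s := by
    intro s hs
    rw [hbridge2 s hs qd hqdm, hqd1]
    exact hu1 s hs
  refine ⟨qd, hqdm, ζ, ?_, ?_, ?_, ?_, ?_, ?_⟩
  -- continuity of ζ
  · intro s0 hs0
    have hs0' : (0:ℝ) < s0 := hs0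
    have hγt : Tendsto γ (𝓝[Ioi 0] s0) (𝓝 (γ s0)) := hγcont s0 hs0
    apply tendsto_order.2
    constructor
    · intro a ha
      rcases le_or_gt a 0 with ha0 | ha0
      · filter_upwards [self_mem_nhdsWithin] with s hs
        exact lt_of_le_of_lt ha0 (hζmem s hs).1
      · have haB : a ∈ Ioo (0:ℝ) B := ⟨ha0, lt_trans ha (hζmem s0 hs0').2⟩
        have hθa : 0 < θ a := hθpos a haB
        have hth : θ a < 1 / γ s0 := (hbridge2 s0 hs0' a haB).mp ha
        have hth' : γ s0 < 1 / θ a := (hltinv _ _ hθa (hγpos s0 hs0')).mp hth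
        filter_upwards [hγt.eventually_lt_const hth', self_mem_nhdsWithin] with s h1 h2
        rw [hbridge2 s h2 a haB]
        exact (hltinv _ _ (hγpos s h2) hθa).mp h1
    · intro a ha
      rcases le_or_gt B a with haB | haB
      · filter_upwards [self_mem_nhdsWithin] with s hs
        exact lt_of_lt_of_le (hζmem s hs).2 haB
      · have haB' : a ∈ Ioo (0:ℝ) B := ⟨lt_trans (hζmem s0 hs0').1 ha, haB⟩
        have hθa : 0 < θ a := hθpos a haB'
        have hth : 1 / γ s0 < θ a := (hbridge1 s0 hs0' a haB').mp ha
        have hth' : 1 / θ a < γ s0 := by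
          rw [div_lt_iff₀ hθa]
          rw [div_lt_iff₀ (hγpos s0 hs0')] at hth
          nlinarith
        filter_upwards [hγt.eventually_const_lt hth', self_mem_nhdsWithin] with s h1 h2
        rw [hbridge1 s h2 a haB']
        rw [div_lt_iff₀ hθa] at h1
        rw [div_lt_iff₀ (hγpos s h2)]
        nlinarith
  -- positivity
  · exact fun s hs => (hζmem s hs).1
  -- strict monotonicity of ζ
  · intro s1 hs1 s2 hs2 h12
    have hs1' : (0:ℝ) < s1 := hs1
    have hs2' : (0:ℝ) < s2 := hs2
    apply (hθmono.lt_iff_lt (hζmem s1 hs1') (hζmem s2 hs2')).mp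
    rw [hζeq s1 hs1', hζeq s2 hs2']
    exact one_div_lt_one_div_of_lt (hγpos s2 hs2') (hγanti hs1 hs2 h12)
  -- limit at 0⁺
  · apply tendsto_order.2
    constructor
    · intro a ha
      filter_upwards [self_mem_nhdsWithin] with s hs
      exact lt_trans ha (hζgtqd s hs)
    · intro a ha
      rcases le_or_gt B a with haB | haB
      · filter_upwards [self_mem_nhdsWithin] with s hs
        exact lt_of_lt_of_le (hζmem s hs).2 haB
      · have haB' : a ∈ Ioo (0:ℝ) B := ⟨lt_trans hqdm.1 ha, haB⟩
        have hθa1 : 1 < θ a := by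
          rw [← hqd1]
          exact hθmono hqdm haB' ha
        have hθa : 0 < θ a := lt_trans one_pos hθa1
        have hlt1 : 1 / θ a < 1 := by
          rw [div_lt_iff₀ hθa]; linarith
        filter_upwards [hγ0.eventually_const_lt hlt1, self_mem_nhdsWithin] with s h1 h2
        rw [hbridge1 s h2 a haB']
        rw [div_lt_iff₀ hθa] at h1
        rw [div_lt_iff₀ (hγpos s h2)]
        nlinarith
  -- limit at +∞
  · apply tendsto_order.2
    constructor
    · intro a ha
      rcases le_or_gt a 0 with ha0 | ha0
      · filter_upwards [eventually_gt_atTop 0] with s hs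
        exact lt_of_le_of_lt ha0 (hζmem s hs).1
      · have haB : a ∈ Ioo (0:ℝ) B := ⟨ha0, ha⟩
        have hθa : 0 < θ a := hθpos a haB
        have h1a : 0 < 1 / θ a := by positivity
        filter_upwards [hγtop.eventually_lt_const h1a, eventually_gt_atTop 0] with s h1 h2
        rw [hbridge2 s h2 a haB]
        exact (hltinv _ _ (hγpos s h2) hθa).mp h1
    · intro a ha
      filter_upwards [eventually_gt_atTop 0] with s hs
      exact lt_trans (hζmem s hs).2 ha
  -- the sign conditions
  · intro s q hs
    have hγs := hγpos s hs
    constructor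
    · intro hq0 hq
      have hqm : q ∈ Ioo (0:ℝ) B := ⟨hq0, lt_trans hq (hζmem s hs).2⟩
      apply ((key (γ s) q hγs hqm).1).mpr
      have hth : θ q < 1 / γ s := (hbridge2 s hs q hqm).mp hq
      rw [lt_div_iff₀ hγs] at hth
      nlinarith
    · intro hq hq2
      rcases lt_or_ge q B with hqB | hqB
      · have hqm : q ∈ Ioo (0:ℝ) B := ⟨lt_trans (hζmem s hs).1 hq, hqB⟩
        apply ((key (γ s) q hγs hqm).2).mpr
        have hth : 1 / γ s < θ q := (hbridge1 s hs q hqm).mp hq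
        rw [div_lt_iff₀ hγs] at hth
        nlinarith
      · have hq0 : 0 < q := lt_of_lt_of_le hB0 hqB
        have hγq : 0 < γ s * q := mul_pos hγs hq0
        have hX0 : 0 < (γ s * q) ^ p := Real.rpow_pos_of_pos hγq _
        rcases lt_or_ge q A with hqA | hqA
        · have h1 : 0 < (A - q) * (γ s * q) ^ p :=
            mul_pos (by linarith) hX0
          show 0 < (A - q) * (γ s * q) ^ p + q - B
          linarith
        · have hle1 : γ s * q ≤ 1 := by
            rw [le_div_iff₀ hγs] at hq2
            nlinarith
          have hXle : (γ s * q) ^ p ≤ 1 := Real.rpow_le_one hγq.le hle1 hp0.le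
          have hprod : 0 ≤ (q - A) * (1 - (γ s * q) ^ p) :=
            mul_nonneg (by linarith) (by linarith)
          show 0 < (A - q) * (γ s * q) ^ p + q - B
          nlinarith
end

section
/- Let m < 0 < n, let F(s) = 1 - e^{-s}, and let H : (0,∞) → ℝ be a differentiable function satisfying 0 < H(s) < s and the ODE H'(s) = F'(s)·((n+1)(H(s)/s)^{n-m} - (m+1))·H(s) / (-mn·(G(s) - H(s))·(1 - (H(s)/s)^{n-m})), where G(s) = ((m+1)(n+1)/(mn))F(s) with m + 1 < 0 and m + n + 1 ≥ 0, and suppose H(s) < G(s). Define A(s) = (m·H(s) - (m+1)F(s)) / ((n-m)·H(s)^{n+1}). Then A'(s) = -F'(s)·(H(s)/s)^{n-m} / (H(s)^{n+1}·(1 - (H(s)/s)^{n-m})) < 0 for all s > 0. -/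
set_option maxHeartbeats 1000000 in
theorem stmt_15 (m n : ℝ) (hm : m < 0) (hn : 0 < n)
    (hm1 : m + 1 < 0) (hmn1 : m + n + 1 ≥ 0)
    (H : ℝ → ℝ)
    (hH : ∀ s : ℝ, 0 < s →
      0 < H s ∧ H s < (m + 1) * (n + 1) / (m * n) * (1 - Real.exp (-s)) ∧ H s < s)
    (hODE : ∀ s : ℝ, 0 < s →
      HasDerivAt H
        (Real.exp (-s) * ((n + 1) * (H s / s) ^ (n - m) - (m + 1)) * H s /
          (-(m * n) * ((m + 1) * (n + 1) / (m * n) * (1 - Real.exp (-s)) - H s) *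
            (1 - (H s / s) ^ (n - m)))) s) :
    ∀ s : ℝ, 0 < s →
      HasDerivAt (fun u =>
          (m * H u - (m + 1) * (1 - Real.exp (-u))) / ((n - m) * H u ^ (n + 1)))
        (-(Real.exp (-s) * (H s / s) ^ (n - m)) /
          (H s ^ (n + 1) * (1 - (H s / s) ^ (n - m)))) s ∧
      -(Real.exp (-s) * (H s / s) ^ (n - m)) /
          (H s ^ (n + 1) * (1 - (H s / s) ^ (n - m))) < 0 := by
  intro s hs
  obtain ⟨hh, hG, hhs⟩ := hH s hs
  have hne : H s ≠ 0 := hh.ne'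
  have hnm : 0 < n - m := by linarith
  have hr0 : 0 < (H s / s) ^ (n - m) := Real.rpow_pos_of_pos (div_pos hh hs) _
  have hr1 : (H s / s) ^ (n - m) < 1 := by
    have h1 : H s / s < 1 := (div_lt_one hs).2 hhs
    have := Real.rpow_lt_one (le_of_lt (div_pos hh hs)) h1 hnm
    exact this
  have h1r : (0:ℝ) < 1 - (H s / s) ^ (n - m) := by linarith
  have hGh : 0 < (m + 1) * (n + 1) / (m * n) * (1 - Real.exp (-s)) - H s := by linarith
  have hmn : m * n < 0 := mul_neg_of_neg_of_pos hm hn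
  have hpowpos : 0 < H s ^ (n + 1) := Real.rpow_pos_of_pos hh _
  have hpownpos : 0 < H s ^ n := Real.rpow_pos_of_pos hh _
  have hexp : HasDerivAt (fun u : ℝ => Real.exp (-u)) (-Real.exp (-s)) s := by
    simpa using (hasDerivAt_neg s).exp
  have hF : HasDerivAt (fun u : ℝ => 1 - Real.exp (-u)) (Real.exp (-s)) s := by
    simpa using hexp.const_sub (1:ℝ)
  have hH' := hODE s hs
  set d := Real.exp (-s) * ((n + 1) * (H s / s) ^ (n - m) - (m + 1)) * H s /
      (-(m * n) * ((m + 1) * (n + 1) / (m * n) * (1 - Real.exp (-s)) - H s) *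
        (1 - (H s / s) ^ (n - m))) with hd
  have hNum : HasDerivAt (fun u => m * H u - (m + 1) * (1 - Real.exp (-u)))
      (m * d - (m + 1) * Real.exp (-s)) s := (hH'.const_mul m).sub (hF.const_mul (m + 1))
  have hpow : HasDerivAt (fun u => H u ^ (n + 1)) (d * (n + 1) * H s ^ n) s := by
    have := hH'.rpow_const (p := n + 1) (Or.inl hne)
    simpa [add_sub_cancel_right] using this
  have hDen : HasDerivAt (fun u => (n - m) * H u ^ (n + 1))
      ((n - m) * (d * (n + 1) * H s ^ n)) s := hpow.const_mul (n - m)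
  have hden_ne : (n - m) * H s ^ (n + 1) ≠ 0 := by positivity
  have hA := hNum.div hDen hden_ne
  have hneg : -(Real.exp (-s) * (H s / s) ^ (n - m)) /
      (H s ^ (n + 1) * (1 - (H s / s) ^ (n - m))) < 0 := by
    apply div_neg_of_neg_of_pos
    · have := Real.exp_pos (-s)
      nlinarith
    · positivity
  refine ⟨?_, hneg⟩
  have hsplit : H s ^ (n + 1) = H s ^ n * H s := Real.rpow_add_one hne n
  have hQne : -(m * n) * ((m + 1) * (n + 1) / (m * n) * (1 - Real.exp (-s)) - H s) *
      (1 - (H s / s) ^ (n - m)) ≠ 0 := by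
    apply mul_ne_zero (mul_ne_zero (by simpa using hmn.ne) hGh.ne') h1r.ne'
  have hdQ : d * (-(m * n) * ((m + 1) * (n + 1) / (m * n) * (1 - Real.exp (-s)) - H s) *
      (1 - (H s / s) ^ (n - m))) =
      Real.exp (-s) * ((n + 1) * (H s / s) ^ (n - m) - (m + 1)) * H s := by
    rw [hd]; exact div_mul_cancel₀ _ hQne
  have hGrel : m * n * ((m + 1) * (n + 1) / (m * n) * (1 - Real.exp (-s))) =
      (m + 1) * (n + 1) * (1 - Real.exp (-s)) := by
    field_simp [hm.ne, hn.ne']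
  refine hA.congr_deriv (Eq.symm ?_)
  rw [hsplit, div_eq_div_iff (by positivity) (by positivity)]
  linear_combination ((n - m) * (H s ^ n) ^ 2 * H s) * hdQ +
    ((n - m) * (H s ^ n) ^ 2 * H s * (1 - (H s / s) ^ (n - m)) * d) * hGrel
end

section
/- Let m < 0 < n, let F(s) = 1 - e^{-s}, and let H be a differentiable function on (0,∞) with 0 < H(s) < G(s) < s satisfying the ODE H'(s) = F'(s)((n+1)(H(s)/s)^{n-m} - (m+1))H(s) / (-mn(G(s) - H(s))(1 - (H(s)/s)^{n-m})), where G(s) = ((m+1)(n+1)/(mn))F(s), m + 1 < 0, m + n + 1 ≥ 0. Define B(s) = ((n+1)F(s) - n·H(s)) / ((n-m)·H(s)^{m+1}). Then B'(s) = F'(s) / (H(s)^{m+1}·(1 - (H(s)/s)^{n-m})) > 0 for all s > 0. -/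
theorem stmt_16 (m n : ℝ) (hm : m < 0) (hn : 0 < n)
    (hm1 : m + 1 < 0) (hmn1 : m + n + 1 ≥ 0)
    (H : ℝ → ℝ)
    (hH : ∀ s : ℝ, 0 < s →
      0 < H s ∧ H s < (m + 1) * (n + 1) / (m * n) * (1 - Real.exp (-s)) ∧ H s < s)
    (hODE : ∀ s : ℝ, 0 < s →
      HasDerivAt H
        (Real.exp (-s) * ((n + 1) * (H s / s) ^ (n - m) - (m + 1)) * H s /
          (-(m * n) * ((m + 1) * (n + 1) / (m * n) * (1 - Real.exp (-s)) - H s) *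
            (1 - (H s / s) ^ (n - m)))) s) :
    ∀ s : ℝ, 0 < s →
      HasDerivAt (fun u =>
          ((n + 1) * (1 - Real.exp (-u)) - n * H u) / ((n - m) * H u ^ (m + 1)))
        (Real.exp (-s) / (H s ^ (m + 1) * (1 - (H s / s) ^ (n - m)))) s ∧
      Real.exp (-s) / (H s ^ (m + 1) * (1 - (H s / s) ^ (n - m))) > 0 := by
  intro s hs
  obtain ⟨hH0, hHG, hHs⟩ := hH s hs
  have hHne : H s ≠ 0 := ne_of_gt hH0
  have hnm : (0:ℝ) < n - m := by linarith
  have hmn0 : m * n < 0 := mul_neg_of_neg_of_pos hm hn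
  have hm0 : m ≠ 0 := ne_of_lt hm
  have hn0 : n ≠ 0 := ne_of_gt hn
  have hr1 : (H s / s) ^ (n - m) < 1 := by
    apply Real.rpow_lt_one (le_of_lt (div_pos hH0 hs)) _ hnm
    exact (div_lt_one hs).mpr hHs
  have hD : (0:ℝ) < 1 - (H s / s) ^ (n - m) := by linarith
  have hGH : (0:ℝ) < (m + 1) * (n + 1) / (m * n) * (1 - Real.exp (-s)) - H s := by
    linarith
  have hApos : (0:ℝ) < H s ^ m := Real.rpow_pos_of_pos hH0 m
  have hA1pos : (0:ℝ) < H s ^ (m + 1) := Real.rpow_pos_of_pos hH0 (m + 1)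
  have hepos : (0:ℝ) < Real.exp (-s) := Real.exp_pos _
  have hpos : Real.exp (-s) / (H s ^ (m + 1) * (1 - (H s / s) ^ (n - m))) > 0 :=
    div_pos hepos (mul_pos hA1pos hD)
  refine ⟨?_, hpos⟩
  have hF : HasDerivAt (fun u => 1 - Real.exp (-u)) (Real.exp (-s)) s := by
    have h1 : HasDerivAt (fun u : ℝ => Real.exp (-u)) (-Real.exp (-s)) s := by
      simpa using (hasDerivAt_neg s).exp
    simpa using h1.const_sub 1
  set H' := Real.exp (-s) * ((n + 1) * (H s / s) ^ (n - m) - (m + 1)) * H s /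
          (-(m * n) * ((m + 1) * (n + 1) / (m * n) * (1 - Real.exp (-s)) - H s) *
            (1 - (H s / s) ^ (n - m))) with hH'def
  have hHd : HasDerivAt H H' s := hODE s hs
  have hnum : HasDerivAt (fun u => (n + 1) * (1 - Real.exp (-u)) - n * H u)
      ((n + 1) * Real.exp (-s) - n * H') s := (hF.const_mul (n + 1)).sub (hHd.const_mul n)
  have hpow : HasDerivAt (fun u => H u ^ (m + 1)) (H' * (m + 1) * H s ^ (m + 1 - 1)) s :=
    hHd.rpow_const (Or.inl hHne)
  have hden : HasDerivAt (fun u => (n - m) * H u ^ (m + 1))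
      ((n - m) * (H' * (m + 1) * H s ^ (m + 1 - 1))) s := hpow.const_mul (n - m)
  have hgne : (n - m) * H s ^ (m + 1) ≠ 0 := by positivity
  have hdiv := hnum.div hden hgne
  -- clean form of the ODE denominator
  have hG : -(m * n) * ((m + 1) * (n + 1) / (m * n) * (1 - Real.exp (-s)) - H s) =
      m * n * H s - (m + 1) * (n + 1) * (1 - Real.exp (-s)) := by
    field_simp
    ring
  have h1ne : -(m * n) * ((m + 1) * (n + 1) / (m * n) * (1 - Real.exp (-s)) - H s) ≠ 0 := by
    intro h
    rcases mul_eq_zero.mp h with h | h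
    · exact (ne_of_lt hmn0) (by linarith)
    · exact (ne_of_gt hGH) h
  have hQne : (m * n * H s - (m + 1) * (n + 1) * (1 - Real.exp (-s))) *
      (1 - (H s / s) ^ (n - m)) ≠ 0 := by
    rw [← hG]; exact mul_ne_zero h1ne hD.ne'
  have hkey2 : H' * ((m * n * H s - (m + 1) * (n + 1) * (1 - Real.exp (-s))) *
      (1 - (H s / s) ^ (n - m))) =
      Real.exp (-s) * ((n + 1) * (H s / s) ^ (n - m) - (m + 1)) * H s := by
    rw [hH'def, hG]
    exact div_mul_cancel₀ _ hQne
  refine hdiv.congr_deriv (Eq.symm ?_)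
  rw [show m + 1 - 1 = m by ring]
  rw [Real.rpow_add_one hHne m]
  rw [div_eq_div_iff (mul_pos (mul_pos hApos hH0) hD).ne'
    (pow_ne_zero 2 (mul_ne_zero hnm.ne' (mul_pos hApos hH0).ne'))]
  linear_combination (-(n - m) * (H s ^ m) ^ 2 * H s) * hkey2
end
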